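/- Let a_n be the number of maximal elements of the poset F_n of odd-part compositions of n (equivalently, the number of odd-part compositions of n with no two consecutive 1's except possibly two consecutive 1's at the beginning). Then a_n = a_{n-1} + a_{n-3} for n ≥ 4, with a_1 = a_2 = a_3 = 1. -/

import Mathlib

/-- `γ` is a composition of `n` into odd parts (parts recorded as a list). -/
def OddComp (n : ℕ) (γ : List ℕ) : Prop :=
  γ.sum = n ∧ ∀ x ∈ γ, Odd x

/-- `CoversF γ ρ`: `ρ` is obtained from `γ` by replacing a part `m > 1`
by the three consecutive parts `m - 2, 1, 1`. -/
def CoversF (γ ρ : List ℕ) : Prop :=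
  ∃ (pre post : List ℕ) (m : ℕ), 1 < m ∧
    γ = pre ++ m :: post ∧ ρ = pre ++ (m - 2) :: 1 :: 1 :: post

/-- The partial order on odd-part compositions: the reflexive-transitive
closure of the covering relation. -/
def leF (ρ γ : List ℕ) : Prop :=
  Relation.ReflTransGen (fun a b => CoversF b a) ρ γ

/-- The set of maximal elements of the poset `F_n`. -/
def maxSet (n : ℕ) : Set (List ℕ) :=
  {γ | OddComp n γ ∧ ∀ ρ : List ℕ, OddComp n ρ → leF γ ρ → ρ = γ}

/-!
A composition is maximal exactly when it is not the result of a splitting, i.e. when no two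
adjacent parts `1, 1` occur after the first part. Sorting by the first part, the maximal
compositions of `n + 3` are `1 :: δ` with `δ` an odd composition of `n + 2` without adjacent
ones, or arise from a maximal composition of `n + 1` by adding `2` to its first part. Writing
`s_n` for the number of odd compositions of `n` without adjacent ones, this gives
`a_{n+3} = s_{n+2} + a_{n+1}`, and `s_{n+3} = s_n + s_{n+2}`: such a composition either starts
with `3`, or comes from one of `n + 2` by `growByOne`. The two recurrences combine to the claim
by a two-step induction.
-/

theorem List.modifyHead_injective {α : Type*} {f : α → α} (hf : f.Injective) :
    (List.modifyHead f).Injective := by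
  rintro (_ | ⟨a, l⟩) (_ | ⟨b, l'⟩) h <;> simp_all [hf.eq_iff]

theorem Set.ncard_image_union_image {α β : Type*} {f g : α → β} {s t : Set α}
    (hf : s.InjOn f) (hg : t.InjOn g) (hs : s.Finite) (ht : t.Finite)
    (hfg : Disjoint (f '' s) (g '' t)) : (f '' s ∪ g '' t).ncard = s.ncard + t.ncard := by
  rw [ncard_union_eq hfg (hs.image f) (ht.image g), hf.ncard_image, hg.ncard_image]

theorem finite_setOf_oddComp (n : ℕ) : {γ | OddComp n γ}.Finite :=
  (Set.finite_range (Composition.blocks : Composition n → List ℕ)).subset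
    fun γ hγ => ⟨⟨γ, fun h => (hγ.2 _ h).pos, hγ.1⟩, rfl⟩

theorem oddComp_nil_iff {n : ℕ} : OddComp n [] ↔ n = 0 := by
  simp [OddComp, eq_comm]

theorem oddComp_cons_iff {n a : ℕ} {l : List ℕ} :
    OddComp n (a :: l) ↔ Odd a ∧ a ≤ n ∧ OddComp (n - a) l := by
  simp only [OddComp, List.sum_cons, List.forall_mem_cons]
  constructor
  · rintro ⟨h, ha, hl⟩
    exact ⟨ha, by omega, by omega, hl⟩
  · rintro ⟨ha, han, h, hl⟩
    exact ⟨by omega, ha, hl⟩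

theorem oddComp_zero_iff {γ : List ℕ} : OddComp 0 γ ↔ γ = [] := by
  rcases γ with _ | ⟨a, l⟩
  · simp [oddComp_nil_iff]
  · simp only [oddComp_cons_iff, reduceCtorEq, iff_false]
    rintro ⟨ha, ha0, -⟩
    simp_all

theorem oddComp_one_iff {γ : List ℕ} : OddComp 1 γ ↔ γ = [1] := by
  rcases γ with _ | ⟨a, l⟩
  · simp [oddComp_nil_iff]
  · constructor
    · rw [oddComp_cons_iff]
      rintro ⟨ha, ha1, hl⟩
      obtain rfl : a = 1 := by rw [Nat.odd_iff] at ha; omega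
      simpa [oddComp_zero_iff] using hl
    · rintro ⟨⟩
      exact ⟨rfl, by simp⟩

theorem oddComp_two_iff {γ : List ℕ} : OddComp 2 γ ↔ γ = [1, 1] := by
  rcases γ with _ | ⟨a, l⟩
  · simp [oddComp_nil_iff]
  · constructor
    · rw [oddComp_cons_iff]
      rintro ⟨ha, ha1, hl⟩
      obtain rfl : a = 1 := by rw [Nat.odd_iff] at ha; omega
      simpa [oddComp_one_iff] using hl
    · rintro ⟨⟩
      exact ⟨rfl, by simp⟩

def NoAdjacentOnes (l : List ℕ) : Prop :=
  l.IsChain fun a b => ¬(a = 1 ∧ b = 1)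

theorem noAdjacentOnes_cons {a : ℕ} {l : List ℕ} :
    NoAdjacentOnes (a :: l) ↔ (a = 1 → l.head? ≠ some 1) ∧ NoAdjacentOnes l := by
  rcases l with _ | ⟨b, l⟩ <;> simp [NoAdjacentOnes, List.isChain_cons_cons]

theorem CoversF.oddComp {n : ℕ} {ρ γ : List ℕ} (h : CoversF ρ γ) (hγ : OddComp n γ) :
    OddComp n ρ := by
  obtain ⟨pre, post, m, hm, rfl, rfl⟩ := h
  obtain ⟨hsum, hodd⟩ := hγ
  simp only [List.mem_append, List.mem_cons] at hodd
  have hm2 : Odd (m - 2) := hodd _ (by simp)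
  refine ⟨by simp_all; omega, fun x hx => ?_⟩
  simp only [List.mem_append, List.mem_cons] at hx
  rcases hx with hx | rfl | hx
  · exact hodd x (Or.inl hx)
  · rw [Nat.odd_iff] at hm2 ⊢; omega
  · exact hodd x (by simp [hx])

theorem CoversF.length_eq {ρ γ : List ℕ} (h : CoversF ρ γ) : γ.length = ρ.length + 2 := by
  obtain ⟨pre, post, m, -, rfl, rfl⟩ := h
  simp; omega

theorem exists_coversF_iff {γ : List ℕ} : (∃ ρ, CoversF ρ γ) ↔ ¬NoAdjacentOnes γ.tail := by
  rw [NoAdjacentOnes, List.isChain_iff_forall_rel_of_append_cons_cons]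
  push Not
  constructor
  · rintro ⟨-, pre, post, m, -, -, rfl⟩
    refine ⟨1, 1, (pre ++ [m - 2]).tail, post, ?_, rfl, rfl⟩
    rw [← List.tail_append_of_ne_nil (by simp)]
    simp
  · rintro ⟨_, _, l₁, l₂, h, rfl, rfl⟩
    obtain ⟨y, rfl⟩ : ∃ y, γ = y :: l₁ ++ 1 :: 1 :: l₂ := by
      rcases γ with _ | ⟨y, l⟩
      · simp at h
      · exact ⟨y, by simp_all⟩
    refine ⟨(y :: l₁).dropLast ++ ((y :: l₁).getLast (by simp) + 2) :: l₂,
      (y :: l₁).dropLast, l₂, _, by omega, rfl, ?_⟩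
    conv_lhs => rw [← List.dropLast_append_getLast (l := y :: l₁) (by simp)]
    simp

theorem mem_maxSet_iff {n : ℕ} {γ : List ℕ} :
    γ ∈ maxSet n ↔ OddComp n γ ∧ NoAdjacentOnes γ.tail := by
  refine ⟨fun ⟨hγ, hmax⟩ => ⟨hγ, ?_⟩, fun ⟨hγ, hno⟩ => ⟨hγ, fun ρ _ hle => ?_⟩⟩
  · by_contra h
    obtain ⟨ρ, hρ⟩ := exists_coversF_iff.mpr h
    have := hρ.length_eq
    rw [hmax ρ (hρ.oddComp hγ) (.single hρ)] at this
    omega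
  · rcases hle.cases_head with h | ⟨b, hb, -⟩
    · exact h.symm
    · exact absurd hno (exists_coversF_iff.mp ⟨b, hb⟩)

def noAdjacentOnesComps (n : ℕ) : Set (List ℕ) := {γ | OddComp n γ ∧ NoAdjacentOnes γ}

-- Prepending `1` to a composition starting with `1` would create adjacent ones, so that `1` is
-- merged into the next part instead.
def growByOne : List ℕ → List ℕ
  | 1 :: k :: l => (k + 2) :: l
  | l => 1 :: l

theorem growByOne_of_head?_ne {l : List ℕ} (h : l.head? ≠ some 1) : growByOne l = 1 :: l := by
  unfold growByOne
  split <;> simp_all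

theorem growByOne_injective : growByOne.Injective := by
  intro l₁ l₂ h
  unfold growByOne at h
  split at h <;> split at h <;> simp_all

theorem head?_growByOne_ne_three {l : List ℕ} (hl : NoAdjacentOnes l) :
    (growByOne l).head? ≠ some 3 := by
  rcases l with _ | ⟨a, l⟩
  · simp [growByOne]
  obtain rfl | ha := eq_or_ne a 1
  · rcases l with _ | ⟨k, l⟩
    · simp [growByOne]
    · have : k ≠ 1 := by simpa using (noAdjacentOnes_cons.mp hl).1 rfl
      simp [growByOne]; omega
  · simp [growByOne_of_head?_ne (l := a :: l) (by simpa)]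

theorem growByOne_mem {n : ℕ} {l : List ℕ} (hl : l ∈ noAdjacentOnesComps (n + 2)) :
    growByOne l ∈ noAdjacentOnesComps (n + 3) := by
  obtain ⟨hl, hno⟩ := hl
  rcases l with _ | ⟨a, l⟩
  · simp [oddComp_nil_iff] at hl
  obtain rfl | ha := eq_or_ne a 1
  · rcases l with _ | ⟨k, l⟩
    · simp [oddComp_cons_iff, oddComp_nil_iff] at hl
    · have hk : k ≠ 1 := by simpa using (noAdjacentOnes_cons.mp hno).1 rfl
      obtain ⟨-, -, hk_odd, hkn, hl⟩ := by simpa only [oddComp_cons_iff] using hl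
      have hno : NoAdjacentOnes l := (noAdjacentOnes_cons.mp (noAdjacentOnes_cons.mp hno).2).2
      refine ⟨oddComp_cons_iff.mpr ⟨hk_odd.add_even even_two, by omega, ?_⟩,
        noAdjacentOnes_cons.mpr ⟨by omega, hno⟩⟩
      convert hl using 1
      omega
  · rw [growByOne_of_head?_ne (by simpa)]
    exact ⟨oddComp_cons_iff.mpr ⟨odd_one, by omega, by simpa using hl⟩,
      noAdjacentOnes_cons.mpr ⟨fun _ => by simpa, hno⟩⟩

theorem noAdjacentOnesComps_add_three (n : ℕ) :
    noAdjacentOnesComps (n + 3) =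
      (3 :: ·) '' noAdjacentOnesComps n ∪ growByOne '' noAdjacentOnesComps (n + 2) := by
  refine Set.Subset.antisymm ?_ <|
    Set.union_subset ?_ (Set.image_subset_iff.mpr fun _ => growByOne_mem)
  · rintro (_ | ⟨a, l⟩) ⟨hγ, hno⟩
    · simp [oddComp_nil_iff] at hγ
    rw [oddComp_cons_iff, Nat.odd_iff] at hγ
    rw [noAdjacentOnes_cons] at hno
    obtain ⟨ha, han, hl⟩ := hγ
    obtain rfl | rfl | ha5 : a = 1 ∨ a = 3 ∨ 5 ≤ a := by omega
    · exact .inr ⟨l, ⟨by simpa using hl, hno.2⟩, growByOne_of_head?_ne (hno.1 rfl)⟩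
    · exact .inl ⟨l, ⟨by simpa using hl, hno.2⟩, rfl⟩
    · refine .inr ⟨1 :: (a - 2) :: l, ⟨?_, ?_⟩, by simp [growByOne]; omega⟩
      · simp only [oddComp_cons_iff, Nat.odd_iff]
        exact ⟨by decide, by omega, by omega, by omega, by convert hl using 1; omega⟩
      · simp only [noAdjacentOnes_cons]
        exact ⟨by simp; omega, by omega, hno.2⟩
  · rintro _ ⟨l, ⟨hl, hno⟩, rfl⟩
    refine ⟨?_, noAdjacentOnes_cons.mpr ⟨by omega, hno⟩⟩
    exact oddComp_cons_iff.mpr ⟨by decide, by omega, by simpa using hl⟩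

theorem maxSet_add_three (n : ℕ) :
    maxSet (n + 3) =
      (1 :: ·) '' noAdjacentOnesComps (n + 2) ∪ List.modifyHead (· + 2) '' maxSet (n + 1) := by
  ext γ
  simp only [Set.mem_union, Set.mem_image, mem_maxSet_iff]
  constructor
  · rcases γ with _ | ⟨a, l⟩
    · simp [oddComp_nil_iff]
    rintro ⟨hγ, hno⟩
    obtain ⟨ha, han, hl⟩ := oddComp_cons_iff.mp hγ
    obtain rfl | ha3 : a = 1 ∨ 3 ≤ a := by rw [Nat.odd_iff] at ha; omega
    · exact .inl ⟨l, ⟨by simpa using hl, hno⟩, rfl⟩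
    · refine .inr ⟨(a - 2) :: l, ⟨oddComp_cons_iff.mpr ⟨?_, by omega, ?_⟩, hno⟩, ?_⟩
      · rw [Nat.odd_iff] at ha ⊢; omega
      · convert hl using 1; omega
      · simp; omega
  · rintro (⟨l, ⟨hl, hno⟩, rfl⟩ | ⟨_ | ⟨a, l⟩, ⟨hl, hno⟩, rfl⟩)
    · exact ⟨oddComp_cons_iff.mpr ⟨odd_one, by omega, by simpa using hl⟩, hno⟩
    · simp [oddComp_nil_iff] at hl
    · obtain ⟨ha, han, hl⟩ := oddComp_cons_iff.mp hl
      rw [List.modifyHead_cons]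
      refine ⟨oddComp_cons_iff.mpr ⟨ha.add_even even_two, by omega, ?_⟩, hno⟩
      convert hl using 1; omega

theorem noAdjacentOnesComps_finite (n : ℕ) : (noAdjacentOnesComps n).Finite :=
  (finite_setOf_oddComp n).subset fun _ h => h.1

theorem maxSet_finite (n : ℕ) : (maxSet n).Finite :=
  (finite_setOf_oddComp n).subset fun _ h => h.1

theorem ncard_noAdjacentOnesComps_add_three (n : ℕ) :
    (noAdjacentOnesComps (n + 3)).ncard =
      (noAdjacentOnesComps n).ncard + (noAdjacentOnesComps (n + 2)).ncard := by
  rw [noAdjacentOnesComps_add_three]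
  refine Set.ncard_image_union_image List.cons_injective.injOn growByOne_injective.injOn
    (noAdjacentOnesComps_finite _) (noAdjacentOnesComps_finite _) ?_
  rw [Set.disjoint_left]
  rintro _ ⟨l, -, rfl⟩ ⟨l', hl', h⟩
  exact head?_growByOne_ne_three hl'.2 (by simp [h])

theorem ncard_maxSet_add_three (n : ℕ) :
    (maxSet (n + 3)).ncard = (noAdjacentOnesComps (n + 2)).ncard + (maxSet (n + 1)).ncard := by
  rw [maxSet_add_three]
  refine Set.ncard_image_union_image List.cons_injective.injOn
    (List.modifyHead_injective (add_left_injective 2)).injOn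
    (noAdjacentOnesComps_finite _) (maxSet_finite _) ?_
  rw [Set.disjoint_left]
  rintro _ ⟨l, -, rfl⟩ ⟨_ | ⟨a, l'⟩, -, h⟩ <;> simp at h

theorem noAdjacentOnesComps_zero : noAdjacentOnesComps 0 = {[]} := by
  ext γ; simp [noAdjacentOnesComps, oddComp_zero_iff, NoAdjacentOnes]
  rintro rfl; simp

theorem noAdjacentOnesComps_one : noAdjacentOnesComps 1 = {[1]} := by
  ext γ; simp [noAdjacentOnesComps, oddComp_one_iff, NoAdjacentOnes]
  rintro rfl; simp

theorem noAdjacentOnesComps_two : noAdjacentOnesComps 2 = ∅ := by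
  ext γ; simp [noAdjacentOnesComps, oddComp_two_iff, NoAdjacentOnes]
  rintro rfl; simp

theorem maxSet_one : maxSet 1 = {[1]} := by
  ext γ; simp [mem_maxSet_iff, oddComp_one_iff, NoAdjacentOnes]
  rintro rfl; simp

theorem maxSet_two : maxSet 2 = {[1, 1]} := by
  ext γ; simp [mem_maxSet_iff, oddComp_two_iff, NoAdjacentOnes]
  rintro rfl; simp

theorem ncard_maxSet_add_four (n : ℕ) :
    (maxSet (n + 4)).ncard = (maxSet (n + 3)).ncard + (maxSet (n + 1)).ncard := by
  induction n using Nat.twoStepInduction with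
  | zero | one =>
    simp [ncard_maxSet_add_three, ncard_noAdjacentOnesComps_add_three, maxSet_one, maxSet_two,
      noAdjacentOnesComps_zero, noAdjacentOnesComps_one, noAdjacentOnesComps_two]
  | more n ih _ =>
    rw [ncard_maxSet_add_three (n + 3), ncard_noAdjacentOnesComps_add_three (n + 2), ih,
      ncard_maxSet_add_three (n + 2), ncard_maxSet_add_three n]
    ring

/-- The number `a_n` of maximal elements of `F_n` satisfies
`a_n = a_{n-1} + a_{n-3}` for `n ≥ 4`, with `a_1 = a_2 = a_3 = 1`. -/
theorem card_maxSet_recurrence :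
    (maxSet 1).ncard = 1 ∧ (maxSet 2).ncard = 1 ∧ (maxSet 3).ncard = 1 ∧
    ∀ n : ℕ, 4 ≤ n →
      (maxSet n).ncard = (maxSet (n - 1)).ncard + (maxSet (n - 3)).ncard := by
  refine ⟨by simp [maxSet_one], by simp [maxSet_two], ?_, fun n hn => ?_⟩
  · simp [ncard_maxSet_add_three 0, noAdjacentOnesComps_two, maxSet_one]
  · obtain ⟨n, rfl⟩ := Nat.exists_eq_add_of_le' hn
    simpa using ncard_maxSet_add_four n
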